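/- Every vertex-transitive non-synchronizing graph is non-separating; equivalently, if a finite vertex-transitive graph Γ is neither null nor complete and ω(Γ) = χ(Γ), then ω(Γ)·α(Γ) = |V(Γ)|. -/

import Mathlib

open SimpleGraph

/-- The independence number of a graph: the clique number of its complement. -/
noncomputable def SimpleGraph.indepNumOfCompl {V : Type*} (G : SimpleGraph V) : ℕ :=
  Gᶜ.cliqueNum

/-- A graph is vertex-transitive if its automorphism group is transitive on vertices. -/
def SimpleGraph.IsVertexTransitive {V : Type*} (G : SimpleGraph V) : Prop :=
  ∀ u v : V, ∃ φ : G ≃g G, φ u = v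

/-!
Colouring with `k` colours partitions the vertices into `k` independent sets, so `n ≤ χ·α`.
Conversely, for a vertex-transitive graph the clique–coclique bound `ω·α ≤ n` holds: average,
over all automorphisms `φ`, the size of `φ(C) ∩ A` for a maximum clique `C` and a maximum
independent set `A`. Each intersection has at most one vertex, while transitivity makes the
average equal to `|C|·|A|/n`. Hence `ω = χ` forces `ω·α = n`.
-/

open Finset

namespace MulAction

variable {H V : Type*} [Group H] [MulAction H V] [Fintype H] [DecidableEq V]

theorem card_filter_smul_eq_card_filter_smul [IsPretransitive H V] (c a a' : V) :
    #{g : H | g • c = a} = #{g : H | g • c = a'} := by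
  obtain ⟨g₀, hg₀⟩ := exists_smul_eq H a a'
  refine card_nbij (g₀ * ·) (fun g hg => ?_) (mul_right_injective g₀).injOn fun g hg => ?_
  · simp_all [mul_smul]
  · refine ⟨g₀⁻¹ * g, ?_, by simp⟩
    simp_all [mul_smul, ← hg₀]

theorem card_mul_card_filter_smul_eq [Fintype V] [IsPretransitive H V] (c a : V) :
    Fintype.card V * #{g : H | g • c = a} = Fintype.card H := by
  calc Fintype.card V * #{g : H | g • c = a}
      = ∑ a' : V, #{g : H | g • c = a'} := by
        simp [card_filter_smul_eq_card_filter_smul c _ a]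
    _ = Fintype.card H :=
        (card_eq_sum_card_fiberwise (fun g _ => mem_univ (g • c))).symm

theorem card_mul_sum_card_filter_smul_mem [Fintype V] [IsPretransitive H V] (S T : Finset V) :
    Fintype.card V * ∑ g : H, #{s ∈ S | g • s ∈ T} = #S * #T * Fintype.card H := by
  have hswap : ∑ g : H, #{s ∈ S | g • s ∈ T} = ∑ s ∈ S, #{g : H | g • s ∈ T} := by
    simp only [card_filter]
    exact sum_comm
  have hfiber (s : V) : #{g : H | g • s ∈ T} = ∑ t ∈ T, #{g : H | g • s = t} := by
    simp only [card_filter]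
    rw [sum_comm]
    simp [sum_ite_eq]
  calc Fintype.card V * ∑ g : H, #{s ∈ S | g • s ∈ T}
      = ∑ s ∈ S, ∑ t ∈ T, Fintype.card V * #{g : H | g • s = t} := by
        simp only [hswap, hfiber, mul_sum]
    _ = #S * #T * Fintype.card H := by
        simp [card_mul_card_filter_smul_eq, mul_assoc]

theorem card_mul_card_le_of_card_filter_smul_mem_le_one [Fintype V] [IsPretransitive H V]
    (S T : Finset V) (h : ∀ g : H, #{s ∈ S | g • s ∈ T} ≤ 1) : #S * #T ≤ Fintype.card V := by
  refine Nat.le_of_mul_le_mul_right ?_ (Fintype.card_pos (α := H))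
  calc #S * #T * Fintype.card H
      = Fintype.card V * ∑ g : H, #{s ∈ S | g • s ∈ T} :=
        (card_mul_sum_card_filter_smul_mem S T).symm
    _ ≤ Fintype.card V * Fintype.card H := by
        gcongr
        simpa using sum_le_sum fun g (_ : g ∈ univ) => h g

end MulAction

namespace SimpleGraph

variable {V : Type*} {G : SimpleGraph V}

theorem IsClique.card_filter_map_mem_le_one {W : Type*} [DecidableEq W] {G' : SimpleGraph W}
    {C : Finset V} (hC : G.IsClique C) {A : Finset W} (hA : G'.IsIndepSet A) (f : G →g G') :
    #{c ∈ C | f c ∈ A} ≤ 1 := by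
  refine card_le_one.mpr fun c hc c' hc' => ?_
  rw [mem_filter] at hc hc'
  by_contra hne
  have hadj := f.map_adj (hC hc.1 hc'.1 hne)
  exact hA hc.2 hc'.2 hadj.ne hadj

theorem Colorable.card_le_mul_indepNum [Fintype V] {k : ℕ} (h : G.Colorable k) :
    Fintype.card V ≤ k * G.indepNum := by
  classical
  obtain ⟨C⟩ := h
  have hclass (i : Fin k) : G.IsIndepSet (({v | C v = i} : Finset V) : Set V) :=
    fun u hu v hv _ hadj => C.valid hadj (by simp_all)
  calc Fintype.card V = ∑ i : Fin k, #{v | C v = i} :=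
        card_eq_sum_card_fiberwise fun v _ => mem_univ (C v)
    _ ≤ ∑ _i : Fin k, G.indepNum := sum_le_sum fun i _ => (hclass i).card_le_indepNum
    _ = k * G.indepNum := by simp

theorem IsVertexTransitive.isPretransitive (h : G.IsVertexTransitive) :
    MulAction.IsPretransitive (G ≃g G) V :=
  ⟨h⟩

theorem IsVertexTransitive.cliqueNum_mul_indepNum_le [Fintype V] (h : G.IsVertexTransitive) :
    G.cliqueNum * G.indepNum ≤ Fintype.card V := by
  classical
  have := h.isPretransitive
  have : Finite (G ≃g G) := DFunLike.finite _
  have := Fintype.ofFinite (G ≃g G)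
  obtain ⟨C, hC⟩ := G.exists_isNClique_cliqueNum
  obtain ⟨A, hA⟩ := G.exists_isNIndepSet_indepNum
  rw [← hC.card_eq, ← hA.card_eq]
  exact MulAction.card_mul_card_le_of_card_filter_smul_mem_le_one C A fun φ : G ≃g G =>
    hC.isClique.card_filter_map_mem_le_one hA.isIndepSet φ.toHom

end SimpleGraph

theorem stmt_2_general {V : Type*} [Fintype V] (G : SimpleGraph V)
    (hvt : G.IsVertexTransitive)
    (hωχ : (G.cliqueNum : ℕ∞) = G.chromaticNumber) :
    G.cliqueNum * G.indepNumOfCompl = Fintype.card V := by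
  have hcol : G.Colorable G.cliqueNum := by
    rw [← chromaticNumber_le_iff_colorable, hωχ]
  rw [indepNumOfCompl, cliqueNum_compl]
  exact le_antisymm hvt.cliqueNum_mul_indepNum_le hcol.card_le_mul_indepNum

/-- Every vertex-transitive non-synchronizing graph is non-separating: if a finite
vertex-transitive graph is neither null nor complete and `ω(Γ) = χ(Γ)`, then
`ω(Γ)·α(Γ) = |V(Γ)|`. -/
theorem stmt_2 {V : Type*} [Fintype V] (G : SimpleGraph V)
    (hvt : G.IsVertexTransitive) (hnn : G ≠ ⊥) (hnc : G ≠ ⊤)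
    (hωχ : (G.cliqueNum : ℕ∞) = G.chromaticNumber) :
    G.cliqueNum * G.indepNumOfCompl = Fintype.card V :=
  stmt_2_general G hvt hωχ
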